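/- For integers 0 ≤ i, j < n-1 with i ≠ j, one has i ≺ j in P(λ) if and only if i < j and for each t ∈ {1, …, d} one of the following holds: (1) s_{t,i} > s_{t,j} > 0; (2) s_{t,i} = 0 and s_{t,j} = s_{t,j-i}; or (3) s_{t,j} = s_{t,i} > 0 and s_{t,j-i} = 0. -/

import Mathlib

/-- The lattice point `p(b)` of the fundamental parallelepiped `Π_λ`:
`p(b) = ((Σ_t ⌈bλ_t/(n-1)⌉) - b, ⌈bλ_1/(n-1)⌉, …, ⌈bλ_d/(n-1)⌉) ∈ ℤ^{d+1}`. -/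
def pfun (d n : ℕ) (lam : Fin d → ℕ) (b : ℤ) : Fin (d + 1) → ℤ :=
  Fin.cons ((∑ t, ⌈(b * lam t : ℚ) / ((n : ℚ) - 1)⌉) - b)
    (fun t => ⌈(b * lam t : ℚ) / ((n : ℚ) - 1)⌉)

/-- The relation `i ≺ j` of the fundamental parallelepiped poset `P(λ)` on `{0, …, n-2}`:
`i ≺ j` iff there exists `0 < ℓ < n-1` with `p(i) + p(ℓ) = p(j)`. -/
def precRel (d n : ℕ) (lam : Fin d → ℕ) (i j : ℤ) : Prop :=
  ∃ l : ℤ, 0 < l ∧ l < (n : ℤ) - 1 ∧ pfun d n lam i + pfun d n lam l = pfun d n lam j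

/-!
Comparing first coordinates, `p(i) + p(ℓ) = p(j)` holds exactly when `ℓ = j - i` and the
ceilings are additive in every coordinate: `⌈iλ_t/m⌉ + ⌈(j-i)λ_t/m⌉ = ⌈jλ_t/m⌉` with `m = n - 1`.
Since `⌈x/m⌉ = x/m + [m ∤ x]` (integer division), additivity says that the carry in adding the
remainders of `iλ_t` and `(j-i)λ_t` equals `[m ∤ iλ_t] + [m ∤ (j-i)λ_t] - [m ∤ jλ_t]`; the carry
is `0` or `1`, and sorting out the cases gives the three alternatives.
-/

open Finset

theorem Int.ceil_intCast_div_intCast_of_pos {K : Type*} [Field K] [LinearOrder K]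
    [IsOrderedRing K] [FloorRing K] {m : ℤ} (hm : 0 < m) (a : ℤ) :
    ⌈(a : K) / m⌉ = a / m + if a % m = 0 then 0 else 1 := by
  rw [← neg_neg ⌈_⌉, ← Int.floor_neg, ← neg_div, ← Int.cast_neg,
    Int.floor_div_cast_of_nonneg hm.le, Int.floor_intCast, Int.neg_ediv,
    Int.sign_eq_one_of_pos hm]
  simp only [Int.dvd_iff_emod_eq_zero]
  split_ifs <;> ring

theorem Int.emod_add_eq_or {m : ℤ} (hm : 0 < m) (a b : ℤ) :
    (a + b) % m = a % m + b % m ∨ (a + b) % m = a % m + b % m - m := by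
  have ha := Int.emod_nonneg a hm.ne'
  have hb := Int.emod_nonneg b hm.ne'
  have ha' := Int.emod_lt_of_pos a hm
  have hb' := Int.emod_lt_of_pos b hm
  rw [Int.add_emod]
  by_cases hlt : a % m + b % m < m
  · exact .inl (Int.emod_eq_of_lt (by omega) hlt)
  · rw [← Int.sub_emod_right]
    exact .inr (Int.emod_eq_of_lt (by omega) (by omega))

theorem Int.ceil_div_add_ceil_div_eq_iff {K : Type*} [Field K] [LinearOrder K]
    [IsOrderedRing K] [FloorRing K] {m : ℤ} (hm : 0 < m) {A B C : ℤ} (hC : A + B = C) :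
    ⌈(A : K) / m⌉ + ⌈(B : K) / m⌉ = ⌈(C : K) / m⌉ ↔
      (A % m > C % m ∧ C % m > 0) ∨
      (A % m = 0 ∧ C % m = B % m) ∨
      (C % m = A % m ∧ A % m > 0 ∧ B % m = 0) := by
  subst hC
  simp only [Int.ceil_intCast_div_intCast_of_pos hm]
  have hA := Int.mul_ediv_add_emod A m
  have hB := Int.mul_ediv_add_emod B m
  have hAB := Int.mul_ediv_add_emod (A + B) m
  have := Int.emod_nonneg A hm.ne'
  have := Int.emod_nonneg B hm.ne'
  have := Int.emod_nonneg (A + B) hm.ne'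
  have := Int.emod_lt_of_pos A hm
  have := Int.emod_lt_of_pos B hm
  rcases Int.emod_add_eq_or hm A B with hr | hr
  · have hq : (A + B) / m = A / m + B / m := mul_left_cancel₀ hm.ne' (by linarith)
    rw [hq]
    split_ifs <;> omega
  · have hq : (A + B) / m = A / m + B / m + 1 := mul_left_cancel₀ hm.ne' (by linarith)
    rw [hq]
    split_ifs <;> omega

theorem Fin.cons_sum_sub_add_cons_sum_sub_eq_iff {M : Type*} [AddCommGroup M] {d : ℕ}
    {x y z : Fin d → M} {a b c : M} :
    (Fin.cons (∑ t, x t - a) x : Fin (d + 1) → M) + Fin.cons (∑ t, y t - b) y =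
        Fin.cons (∑ t, z t - c) z ↔ a + b = c ∧ x + y = z := by
  rw [show (Fin.cons (∑ t, x t - a) x : Fin (d + 1) → M) + Fin.cons (∑ t, y t - b) y =
      Fin.cons (∑ t, x t - a + (∑ t, y t - b)) (x + y) from Matrix.cons_add_cons _ _ _ _,
    Fin.cons_inj]
  constructor
  · rintro ⟨h0, rfl⟩
    refine ⟨?_, rfl⟩
    simp only [Pi.add_apply, sum_add_distrib] at h0
    calc a + b = (∑ t, x t + ∑ t, y t) - (∑ t, x t - a + (∑ t, y t - b)) := by abel
      _ = c := by rw [h0]; abel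
  · rintro ⟨rfl, rfl⟩
    refine ⟨?_, rfl⟩
    simp only [Pi.add_apply, sum_add_distrib]
    abel

theorem pfun_add_pfun_eq_iff {d n : ℕ} {lam : Fin d → ℕ} {i l j : ℤ} :
    pfun d n lam i + pfun d n lam l = pfun d n lam j ↔
      i + l = j ∧ ∀ t, ⌈(i * lam t : ℚ) / ((n : ℚ) - 1)⌉ + ⌈(l * lam t : ℚ) / ((n : ℚ) - 1)⌉ =
        ⌈(j * lam t : ℚ) / ((n : ℚ) - 1)⌉ :=
  Fin.cons_sum_sub_add_cons_sum_sub_eq_iff.trans (and_congr_right' funext_iff)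

theorem precRel_iff {d n : ℕ} {lam : Fin d → ℕ} {i j : ℤ} :
    precRel d n lam i j ↔ 0 < j - i ∧ j - i < (n : ℤ) - 1 ∧
      ∀ t, ⌈(i * lam t : ℚ) / ((n : ℚ) - 1)⌉ + ⌈((j - i : ℤ) * lam t : ℚ) / ((n : ℚ) - 1)⌉ =
        ⌈(j * lam t : ℚ) / ((n : ℚ) - 1)⌉ := by
  simp only [precRel, pfun_add_pfun_eq_iff]
  constructor
  · rintro ⟨l, hl0, hl1, hl, hceil⟩
    obtain rfl : l = j - i := by omega
    exact ⟨hl0, hl1, hceil⟩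
  · rintro ⟨h0, h1, hceil⟩
    exact ⟨j - i, h0, h1, by ring, hceil⟩

theorem stmt_6_general (d n : ℕ) (lam : Fin d → ℕ)
    (s : Fin d → ℤ → ℤ) (hs : ∀ t b, s t b = (b * lam t) % ((n : ℤ) - 1))
    (i j : ℤ) (hi0 : 0 ≤ i) (hi1 : i < (n : ℤ) - 1)
    (hj1 : j < (n : ℤ) - 1) :
    precRel d n lam i j ↔
      i < j ∧ ∀ t : Fin d,
        (s t i > s t j ∧ s t j > 0) ∨
        (s t i = 0 ∧ s t j = s t (j - i)) ∨
        (s t j = s t i ∧ s t i > 0 ∧ s t (j - i) = 0) := by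
  have hm : (0 : ℤ) < (n : ℤ) - 1 := by omega
  have hstep : ∀ t, ⌈(i * lam t : ℚ) / ((n : ℚ) - 1)⌉ +
      ⌈((j - i : ℤ) * lam t : ℚ) / ((n : ℚ) - 1)⌉ = ⌈(j * lam t : ℚ) / ((n : ℚ) - 1)⌉ ↔
      (s t i > s t j ∧ s t j > 0) ∨ (s t i = 0 ∧ s t j = s t (j - i)) ∨
        (s t j = s t i ∧ s t i > 0 ∧ s t (j - i) = 0) := by
    intro t
    simp only [hs]
    have key := Int.ceil_div_add_ceil_div_eq_iff (K := ℚ) hm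
      (show i * lam t + (j - i) * lam t = j * lam t by ring)
    push_cast at key ⊢
    exact key
  rw [precRel_iff, forall_congr' hstep]
  constructor
  · rintro ⟨hpos, -, h⟩
    exact ⟨by omega, h⟩
  · rintro ⟨hlt, h⟩
    exact ⟨by omega, by omega, h⟩

/-- For integers `0 ≤ i, j < n-1` with `i ≠ j`, one has `i ≺ j` in `P(λ)` iff
`i < j` and for each `t` one of: (1) `s_{t,i} > s_{t,j} > 0`;
(2) `s_{t,i} = 0` and `s_{t,j} = s_{t,j-i}`; or (3) `s_{t,j} = s_{t,i} > 0` and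
`s_{t,j-i} = 0`, where `s_{t,b}` is the remainder of `b·λ_t` upon division by `n-1`. -/
theorem stmt_6 (d n : ℕ) (hd : 1 ≤ d) (hn : 3 ≤ n) (lam : Fin d → ℕ)
    (hpos : ∀ t, 0 < lam t) (hsum : ∑ t, lam t = n)
    (s : Fin d → ℤ → ℤ) (hs : ∀ t b, s t b = (b * lam t) % ((n : ℤ) - 1))
    (i j : ℤ) (hi0 : 0 ≤ i) (hi1 : i < (n : ℤ) - 1)
    (hj0 : 0 ≤ j) (hj1 : j < (n : ℤ) - 1) (hij : i ≠ j) :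
    precRel d n lam i j ↔
      i < j ∧ ∀ t : Fin d,
        (s t i > s t j ∧ s t j > 0) ∨
        (s t i = 0 ∧ s t j = s t (j - i)) ∨
        (s t j = s t i ∧ s t i > 0 ∧ s t (j - i) = 0) :=
  stmt_6_general d n lam s hs i j hi0 hi1 hj1
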